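/- Let P be a maximal P2-packing of size j in a graph G. If G has a P2-packing of size j+1, then there exists a P2-packing Q of size j+1 with |V(P) ∩ V(Q)| ≥ 2.5·j, i.e., Q reuses at least 5j/2 of the 3j vertices of P. -/

import Mathlib

/-
Among the packings of size `j + 1`, take `Q` maximising its overlap with `P`: shared vertices
first, shared edges second. Replacing one path of `Q` by a path that avoids the rest of `Q`
cannot increase the overlap. Such exchanges show that every path of `P` has at most one vertex
outside `V(Q)`, and that a path `p` with such a vertex is bridged, by a path of `Q` with one
vertex in `p` and the other two in `p'`, to a path `p'` of `P` lying inside `V(Q)`. Distinct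
`p` are bridged to distinct `p'`, so at most `j / 2` paths of `P` miss a vertex of `V(Q)`, and
`|V(P) ∩ V(Q)| ≥ 3j - j / 2`.
-/

open Finset

def P2Verts {V : Type*} [DecidableEq V] (p : V × V × V) : Finset V := {p.1, p.2.1, p.2.2}

def IsP2 {V : Type*} (G : SimpleGraph V) (p : V × V × V) : Prop :=
  G.Adj p.1 p.2.1 ∧ G.Adj p.2.1 p.2.2 ∧ p.1 ≠ p.2.2

def IsP2Packing {V : Type*} [DecidableEq V] (G : SimpleGraph V) (P : Finset (V × V × V)) : Prop :=
  (∀ p ∈ P, IsP2 G p) ∧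
  ∀ p ∈ P, ∀ q ∈ P, p ≠ q → Disjoint (P2Verts p) (P2Verts q)

def PackVerts {V : Type*} [DecidableEq V] (P : Finset (V × V × V)) : Finset V :=
  P.biUnion P2Verts

def IsMaximalP2Packing {V : Type*} [DecidableEq V] (G : SimpleGraph V)
    (P : Finset (V × V × V)) : Prop :=
  IsP2Packing G P ∧ ∀ q, IsP2 G q → ¬ Disjoint (P2Verts q) (PackVerts P)

def P2Edges {V : Type*} [DecidableEq V] (p : V × V × V) : Finset (Sym2 V) :=
  {s(p.1, p.2.1), s(p.2.1, p.2.2)}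

section

variable {V : Type*} [DecidableEq V] {G : SimpleGraph V} {P Q : Finset (V × V × V)}
  {n : ℕ}

lemma mem_P2Verts {x : V} {p : V × V × V} :
    x ∈ P2Verts p ↔ x = p.1 ∨ x = p.2.1 ∨ x = p.2.2 := by
  simp [P2Verts]

@[simp]
lemma P2Verts_mk (x y z : V) : P2Verts (x, y, z) = {x, y, z} := rfl

lemma mem_P2Edges {e : Sym2 V} {p : V × V × V} :
    e ∈ P2Edges p ↔ e = s(p.1, p.2.1) ∨ e = s(p.2.1, p.2.2) := by
  simp [P2Edges]

lemma P2Verts_reverse (x y z : V) : P2Verts (z, y, x) = P2Verts (x, y, z) := by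
  ext; simp only [mem_P2Verts]; tauto

lemma P2Edges_reverse (x y z : V) : P2Edges (z, y, x) = P2Edges (x, y, z) := by
  simp only [P2Edges]
  rw [pair_comm, Sym2.eq_swap (a := z), Sym2.eq_swap (a := y) (b := x)]

omit [DecidableEq V] in
lemma IsP2.reverse {x y z : V} (h : IsP2 G (x, y, z)) : IsP2 G (z, y, x) :=
  ⟨h.2.1.symm, h.1.symm, h.2.2.symm⟩

lemma card_P2Verts_le (p : V × V × V) : #(P2Verts p) ≤ 3 := card_le_three

lemma IsP2.card_P2Verts {p : V × V × V} (h : IsP2 G p) : #(P2Verts p) = 3 :=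
  card_eq_three.2 ⟨_, _, _, h.1.ne, h.2.2, h.2.1.ne, rfl⟩

omit [DecidableEq V] in
lemma IsP2.mk_ne_mk {p : V × V × V} (h : IsP2 G p) : s(p.1, p.2.1) ≠ s(p.2.1, p.2.2) :=
  fun he => h.2.2 <| by
    rcases Sym2.eq_iff.1 he with ⟨h1, h2⟩ | ⟨h1, -⟩
    exacts [h1.trans h2, h1]

lemma IsP2.card_P2Edges {p : V × V × V} (h : IsP2 G p) : #(P2Edges p) = 2 :=
  card_pair h.mk_ne_mk

lemma IsP2.P2Verts_eq {p : V × V × V} (h : IsP2 G p) {a b c : V} (ha : a ∈ P2Verts p)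
    (hb : b ∈ P2Verts p) (hc : c ∈ P2Verts p) (hab : a ≠ b) (hac : a ≠ c) (hbc : b ≠ c) :
    P2Verts p = {a, b, c} :=
  (eq_of_subset_of_card_le (by simp [insert_subset_iff, ha, hb, hc])
    (by rw [h.card_P2Verts, card_eq_three.2 ⟨a, b, c, hab, hac, hbc, rfl⟩])).symm

lemma IsP2.not_insert_subset {p q : V × V × V} (hp : IsP2 G p) (hq : IsP2 G q) {u : V}
    (hu : u ∉ P2Verts q) : ¬ insert u (P2Verts q) ⊆ P2Verts p := fun h => by
  have := card_le_card h
  rw [card_insert_of_notMem hu, hq.card_P2Verts, hp.card_P2Verts] at this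
  omega

lemma mem_P2Verts_of_mem_P2Edges {e : Sym2 V} {p : V × V × V} (he : e ∈ P2Edges p) {x : V}
    (hx : x ∈ e) : x ∈ P2Verts p := by
  rcases mem_P2Edges.1 he with rfl | rfl <;> rcases Sym2.mem_iff.1 hx with rfl | rfl <;>
    simp [mem_P2Verts]

lemma IsP2.exists_mem_P2Edges {p : V × V × V} (h : IsP2 G p) {u : V} (hu : u ∈ P2Verts p) :
    ∃ v, G.Adj u v ∧ s(u, v) ∈ P2Edges p := by
  rcases mem_P2Verts.1 hu with rfl | rfl | rfl
  · exact ⟨p.2.1, h.1, by simp [P2Edges]⟩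
  · exact ⟨p.1, h.1.symm, by simp [P2Edges, Sym2.eq_swap]⟩
  · exact ⟨p.2.1, h.2.1.symm, by simp [P2Edges, Sym2.eq_swap]⟩

def PackEdges (P : Finset (V × V × V)) : Finset (Sym2 V) := P.biUnion P2Edges

lemma mem_PackVerts {x : V} : x ∈ PackVerts P ↔ ∃ p ∈ P, x ∈ P2Verts p := by
  simp [PackVerts]

lemma mem_PackEdges {e : Sym2 V} : e ∈ PackEdges P ↔ ∃ p ∈ P, e ∈ P2Edges p := by
  simp [PackEdges]

lemma P2Verts_subset_PackVerts {p : V × V × V} (hp : p ∈ P) : P2Verts p ⊆ PackVerts P :=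
  subset_biUnion_of_mem _ hp

lemma P2Edges_subset_PackEdges {p : V × V × V} (hp : p ∈ P) : P2Edges p ⊆ PackEdges P :=
  subset_biUnion_of_mem _ hp

namespace IsP2Packing

lemma mono (hP : IsP2Packing G P) (hQP : Q ⊆ P) : IsP2Packing G Q :=
  ⟨fun p hp => hP.1 p (hQP hp), fun p hp q hq => hP.2 p (hQP hp) q (hQP hq)⟩

lemma insert (hP : IsP2Packing G P) {r : V × V × V} (hr : IsP2 G r)
    (hdisj : ∀ p ∈ P, Disjoint (P2Verts r) (P2Verts p)) : IsP2Packing G (insert r P) := by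
  refine ⟨fun p hp => ?_, fun p hp q hq hne => ?_⟩
  · rcases mem_insert.1 hp with rfl | hp
    exacts [hr, hP.1 p hp]
  · rcases mem_insert.1 hp with rfl | hp' <;> rcases mem_insert.1 hq with rfl | hq'
    · exact absurd rfl hne
    · exact hdisj q hq'
    · exact (hdisj p hp').symm
    · exact hP.2 p hp' q hq' hne

lemma eq_of_mem_P2Verts (hP : IsP2Packing G P) {p q : V × V × V} (hp : p ∈ P) (hq : q ∈ P)
    {x : V} (hxp : x ∈ P2Verts p) (hxq : x ∈ P2Verts q) : p = q := by
  by_contra hne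
  exact disjoint_left.1 (hP.2 p hp q hq hne) hxp hxq

lemma mem_P2Verts_of_mk_mem_PackEdges (hP : IsP2Packing G P) {p : V × V × V} (hp : p ∈ P)
    {a b : V} (ha : a ∈ P2Verts p) (h : s(a, b) ∈ PackEdges P) : b ∈ P2Verts p := by
  obtain ⟨q, hq, he⟩ := mem_PackEdges.1 h
  rw [hP.eq_of_mem_P2Verts hp hq ha (mem_P2Verts_of_mem_P2Edges he (Sym2.mem_mk_left _ _))]
  exact mem_P2Verts_of_mem_P2Edges he (Sym2.mem_mk_right _ _)

lemma card_PackVerts_inter (hP : IsP2Packing G P) (S : Finset V) :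
    #(PackVerts P ∩ S) = ∑ p ∈ P, #(P2Verts p ∩ S) := by
  rw [PackVerts, biUnion_inter, card_biUnion]
  exact fun p hp q hq hne => (hP.2 p hp q hq hne).mono inter_subset_left inter_subset_left

lemma card_PackVerts (hP : IsP2Packing G P) : #(PackVerts P) = 3 * #P := by
  rw [PackVerts, card_biUnion hP.2, sum_congr rfl fun p hp => (hP.1 p hp).card_P2Verts,
    sum_const, smul_eq_mul, mul_comm]

lemma exists_not_subset_PackVerts (hP : IsP2Packing G P) (hQ : IsP2Packing G Q)
    (hlt : #P < #Q) : ∃ q ∈ Q, ¬ P2Verts q ⊆ PackVerts P := by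
  by_contra! h
  have := card_le_card (show PackVerts Q ⊆ PackVerts P from biUnion_subset.2 h)
  rw [hQ.card_PackVerts, hP.card_PackVerts] at this
  omega

end IsP2Packing

/-- A path has at most two edges, so with vertices weighted 3, comparing weights compares the
numbers of shared vertices first and breaks ties by the numbers of shared edges. -/
def overlapWeight (P : Finset (V × V × V)) (q : V × V × V) : ℕ :=
  3 * #(P2Verts q ∩ PackVerts P) + #(P2Edges q ∩ PackEdges P)

lemma overlapWeight_reverse (P : Finset (V × V × V)) (x y z : V) :
    overlapWeight P (z, y, x) = overlapWeight P (x, y, z) := by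
  rw [overlapWeight, overlapWeight, P2Verts_reverse, P2Edges_reverse]

lemma overlapWeight_le (P : Finset (V × V × V)) (q : V × V × V) : overlapWeight P q ≤ 11 := by
  have hV : #(P2Verts q ∩ PackVerts P) ≤ 3 :=
    (card_le_card inter_subset_left).trans (card_P2Verts_le q)
  have hE : #(P2Edges q ∩ PackEdges P) ≤ 2 := (card_le_card inter_subset_left).trans card_le_two
  rw [overlapWeight]
  omega

lemma IsP2Packing.overlapWeight_eq_of_mem (hP : IsP2Packing G P) {p : V × V × V} (hp : p ∈ P) :
    overlapWeight P p = 11 := by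
  rw [overlapWeight, inter_eq_left.2 (P2Verts_subset_PackVerts hp),
    inter_eq_left.2 (P2Edges_subset_PackEdges hp), (hP.1 p hp).card_P2Verts,
    (hP.1 p hp).card_P2Edges]

lemma IsP2.overlapWeight_eq {x y z : V} (h : IsP2 G (x, y, z)) :
    overlapWeight P (x, y, z) =
      3 * ((if x ∈ PackVerts P then 1 else 0) + (if y ∈ PackVerts P then 1 else 0) +
          (if z ∈ PackVerts P then 1 else 0)) +
        ((if s(x, y) ∈ PackEdges P then 1 else 0) +
          (if s(y, z) ∈ PackEdges P then 1 else 0)) := by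
  rw [overlapWeight, P2Verts, P2Edges, ← filter_mem_eq_inter, ← filter_mem_eq_inter,
    card_filter, card_filter, sum_insert (by simp [h.1.ne, h.2.2]), sum_insert (by simp [h.2.1.ne]),
    sum_singleton, sum_insert (by simpa using h.mk_ne_mk), sum_singleton]
  ring

lemma IsP2Packing.exists_P2Verts_eq_of_overlapWeight (hP : IsP2Packing G P) {q : V × V × V}
    (hq : IsP2 G q) (hw : 11 ≤ overlapWeight P q) : ∃ p ∈ P, P2Verts q = P2Verts p := by
  obtain ⟨x, y, z⟩ := q
  rw [hq.overlapWeight_eq] at hw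
  have hxy : s(x, y) ∈ PackEdges P := by
    by_contra h
    rw [if_neg h] at hw
    split_ifs at hw <;> omega
  have hyz : s(y, z) ∈ PackEdges P := by
    by_contra h
    rw [if_neg h] at hw
    split_ifs at hw <;> omega
  obtain ⟨p, hp, he⟩ := mem_PackEdges.1 hxy
  have hy := mem_P2Verts_of_mem_P2Edges he (Sym2.mem_mk_right _ _)
  refine ⟨p, hp, ((hP.1 p hp).P2Verts_eq (mem_P2Verts_of_mem_P2Edges he (Sym2.mem_mk_left _ _))
    hy (hP.mem_P2Verts_of_mk_mem_PackEdges hp hy hyz) hq.1.ne hq.2.2 hq.2.1.ne).symm⟩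

/-- `(u, d, d')` is `(a, b, c)` with `a` traded for `u`: it gains `u` and the edge `ud` of `P`
and loses only `a` and `ab`, so it can weigh no more only if `ab` is an edge of `P`. -/
lemma mem_PackEdges_of_overlapWeight_le {a b c u d d' : V} (hq : IsP2 G (a, b, c))
    (hr : IsP2 G (u, d, d')) (hdd' : s(d, d') = s(b, c)) (hu : u ∈ PackVerts P)
    (hud : s(u, d) ∈ PackEdges P)
    (hw : overlapWeight P (u, d, d') ≤ overlapWeight P (a, b, c)) :
    s(a, b) ∈ PackEdges P := by
  rw [hq.overlapWeight_eq, hr.overlapWeight_eq, hdd', if_pos hu, if_pos hud] at hw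
  by_contra h
  rw [if_neg h] at hw
  rcases Sym2.eq_iff.1 hdd' with ⟨rfl, rfl⟩ | ⟨rfl, rfl⟩ <;> split_ifs at hw <;> omega

def Bridges (Q : Finset (V × V × V)) (p p' : V × V × V) : Prop :=
  ∃ q ∈ Q, ∃ v ∈ P2Verts p, v ∈ P2Verts q ∧ (P2Verts q).erase v ⊆ P2Verts p'

lemma IsP2Packing.eq_of_bridges (hP : IsP2Packing G P) (hQ : IsP2Packing G Q)
    {p₁ p₂ p' : V × V × V} (hp₁ : p₁ ∈ P) (hp₂ : p₂ ∈ P) (hp' : p' ∈ P)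
    (hcov : P2Verts p' ⊆ PackVerts Q) (hnot₂ : ¬ P2Verts p₂ ⊆ PackVerts Q)
    (h₁ : Bridges Q p₁ p') (h₂ : Bridges Q p₂ p') : p₁ = p₂ := by
  obtain ⟨q₁, hq₁, v₁, hv₁p, hv₁q, hsub₁⟩ := h₁
  obtain ⟨q₂, hq₂, v₂, hv₂p, hv₂q, hsub₂⟩ := h₂
  obtain rfl | hq := eq_or_ne q₁ q₂
  · obtain rfl | hv := eq_or_ne v₁ v₂
    · exact hP.eq_of_mem_P2Verts hp₁ hp₂ hv₁p hv₂p
    · have := hP.eq_of_mem_P2Verts hp' hp₂ (hsub₁ (mem_erase.2 ⟨hv.symm, hv₂q⟩)) hv₂p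
      exact absurd (this ▸ hcov) hnot₂
  · have hdisj : Disjoint ((P2Verts q₁).erase v₁) ((P2Verts q₂).erase v₂) :=
      (hQ.2 _ hq₁ _ hq₂ hq).mono (erase_subset _ _) (erase_subset _ _)
    have := card_le_card (union_subset hsub₁ hsub₂)
    rw [card_union_of_disjoint hdisj, card_erase_of_mem hv₁q, card_erase_of_mem hv₂q,
      (hQ.1 _ hq₁).card_P2Verts, (hQ.1 _ hq₂).card_P2Verts, (hP.1 _ hp').card_P2Verts] at this
    omega

structure IsHeaviestPacking (G : SimpleGraph V) (P : Finset (V × V × V)) (n : ℕ)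
    (Q : Finset (V × V × V)) : Prop where
  isP2Packing : IsP2Packing G Q
  card_eq : #Q = n
  sum_le : ∀ R, IsP2Packing G R → #R = n →
    ∑ r ∈ R, overlapWeight P r ≤ ∑ q ∈ Q, overlapWeight P q

lemma exists_isHeaviestPacking (P : Finset (V × V × V))
    (h : ∃ Q : Finset (V × V × V), IsP2Packing G Q ∧ #Q = n) :
    ∃ Q, IsHeaviestPacking G P n Q := by
  set S : Set ℕ := {m | ∃ R, IsP2Packing G R ∧ #R = n ∧ ∑ r ∈ R, overlapWeight P r = m}
  have hS : S.Nonempty := let ⟨Q, hQ, hQn⟩ := h; ⟨_, Q, hQ, hQn, rfl⟩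
  have hbdd : BddAbove S := by
    refine ⟨n * 11, ?_⟩
    rintro _ ⟨R, -, rfl, rfl⟩
    simpa using sum_le_card_nsmul R _ 11 fun r _ => overlapWeight_le P r
  obtain ⟨Q, hQ, hQn, hsum⟩ := Nat.sSup_mem hS hbdd
  exact ⟨Q, hQ, hQn, fun R hR hRn => hsum ▸ le_csSup hbdd ⟨R, hR, hRn, rfl⟩⟩

namespace IsHeaviestPacking

variable (hQ : IsHeaviestPacking G P n Q)
include hQ

lemma overlapWeight_le_of_inter_subset {q r : V × V × V} (hq : q ∈ Q) (hr : IsP2 G r)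
    (hsub : P2Verts r ∩ PackVerts Q ⊆ P2Verts q) : overlapWeight P r ≤ overlapWeight P q := by
  have hdisj : ∀ q' ∈ Q.erase q, Disjoint (P2Verts r) (P2Verts q') := by
    intro q' hq'
    obtain ⟨hne, hq'Q⟩ := mem_erase.1 hq'
    refine disjoint_left.2 fun x hxr hxq' => ?_
    have hxq : x ∈ P2Verts q := hsub (mem_inter.2 ⟨hxr, P2Verts_subset_PackVerts hq'Q hxq'⟩)
    exact disjoint_left.1 (hQ.isP2Packing.2 q hq q' hq'Q hne.symm) hxq hxq'
  have hrQ : r ∉ Q.erase q := fun h => by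
    simpa [P2Verts] using (disjoint_self_iff_empty _).1 (hdisj r h)
  have hsum := hQ.sum_le _ ((hQ.isP2Packing.mono (erase_subset q Q)).insert hr hdisj)
    (by rw [card_insert_of_notMem hrQ, card_erase_add_one hq, hQ.card_eq])
  rw [sum_insert hrQ, ← sum_erase_add _ _ hq] at hsum
  omega

lemma overlapWeight_le_of_subset_insert {q r : V × V × V} (hq : q ∈ Q) {u : V}
    (hu : u ∉ PackVerts Q) (hr : IsP2 G r) (hsub : P2Verts r ⊆ insert u (P2Verts q)) :
    overlapWeight P r ≤ overlapWeight P q :=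
  hQ.overlapWeight_le_of_inter_subset hq hr fun x hx => by
    obtain ⟨hxr, hxQ⟩ := mem_inter.1 hx
    rcases mem_insert.1 (hsub hxr) with rfl | h
    exacts [absurd hxQ hu, h]

lemma exists_P2Verts_eq (hP : IsP2Packing G P) {p q : V × V × V} (hp : p ∈ P) (hq : q ∈ Q)
    (hsub : P2Verts p ∩ PackVerts Q ⊆ P2Verts q) : ∃ p' ∈ P, P2Verts q = P2Verts p' :=
  hP.exists_P2Verts_eq_of_overlapWeight (hQ.isP2Packing.1 q hq)
    ((hP.overlapWeight_eq_of_mem hp).symm.le.trans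
      (hQ.overlapWeight_le_of_inter_subset hq (hP.1 p hp) hsub))

lemma card_P2Verts_sdiff_le_one (hP : IsP2Packing G P) (hlt : #P < n) {p : V × V × V}
    (hp : p ∈ P) : #(P2Verts p \ PackVerts Q) ≤ 1 := by
  by_contra! h
  have hsmall : #(P2Verts p ∩ PackVerts Q) ≤ 1 := by
    have := card_sdiff_add_card_inter (P2Verts p) (PackVerts Q)
    rw [(hP.1 p hp).card_P2Verts] at this
    omega
  rcases (P2Verts p ∩ PackVerts Q).eq_empty_or_nonempty with hempty | ⟨t, ht⟩
  · obtain ⟨q, hq, hqP⟩ := hP.exists_not_subset_PackVerts hQ.isP2Packing (hQ.card_eq ▸ hlt)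
    obtain ⟨p', hp', hqp'⟩ := hQ.exists_P2Verts_eq hP hp hq (hempty ▸ empty_subset _)
    exact hqP (hqp' ▸ P2Verts_subset_PackVerts hp')
  · obtain ⟨htp, htQ⟩ := mem_inter.1 ht
    obtain ⟨q, hq, htq⟩ := mem_PackVerts.1 htQ
    obtain ⟨p', hp', hqp'⟩ := hQ.exists_P2Verts_eq hP hp hq
      fun x hx => card_le_one.1 hsmall x hx t ht ▸ htq
    have hpq : P2Verts p = P2Verts q := by
      rw [hqp', hP.eq_of_mem_P2Verts hp hp' htp (hqp' ▸ htq)]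
    rw [sdiff_eq_empty_iff_subset.2 (hpq ▸ P2Verts_subset_PackVerts hq)] at h
    simp at h

lemma P2Verts_subset_PackVerts_of_pair (hP : IsP2Packing G P) {p p' q : V × V × V}
    (hp : p ∈ P) (hp' : p' ∈ P) (hq : q ∈ Q) (hne : p ≠ p') {x y z : V} (hxq : x ∈ P2Verts q)
    (hxp : x ∈ P2Verts p) (hyq : y ∈ P2Verts q) (hyp' : y ∈ P2Verts p') (hzq : z ∈ P2Verts q)
    (hzp' : z ∈ P2Verts p') (hyz : y ≠ z) : P2Verts p' ⊆ PackVerts Q := by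
  have hqQ := P2Verts_subset_PackVerts hq
  intro w hwp'
  by_contra hwQ
  have hV' : P2Verts p' = {y, z, w} := (hP.1 p' hp').P2Verts_eq hyp' hzp' hwp' hyz
    (fun h => hwQ (h ▸ hqQ hyq)) (fun h => hwQ (h ▸ hqQ hzq))
  obtain ⟨p'', hp'', hqp''⟩ := hQ.exists_P2Verts_eq hP hp' hq (by
    rw [hV']
    intro a ha
    obtain ⟨ha, haQ⟩ := mem_inter.1 ha
    rcases mem_insert.1 ha with rfl | ha
    · exact hyq
    rcases mem_insert.1 ha with rfl | ha
    · exact hzq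
    exact absurd (mem_singleton.1 ha ▸ haQ) hwQ)
  -- `q` would be a path of `P` meeting both `p` and `p'`
  exact hne ((hP.eq_of_mem_P2Verts hp'' hp (hqp'' ▸ hxq) hxp).symm.trans
    (hP.eq_of_mem_P2Verts hp'' hp' (hqp'' ▸ hyq) hyp'))

lemma exists_bridges_of_endpoint (hP : IsP2Packing G P) {p q : V × V × V} (hp : p ∈ P)
    (hq : q ∈ Q) {x y z u : V} (hxyz : IsP2 G (x, y, z)) (hV : P2Verts q = P2Verts (x, y, z))
    (hE : P2Edges q = P2Edges (x, y, z)) (huQ : u ∉ PackVerts Q) (hux : G.Adj u x)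
    (he : s(u, x) ∈ P2Edges p) : ∃ p' ∈ P, P2Verts p' ⊆ PackVerts Q ∧ Bridges Q p p' := by
  have hu := mem_P2Verts_of_mem_P2Edges he (Sym2.mem_mk_left _ _)
  have hx := mem_P2Verts_of_mem_P2Edges he (Sym2.mem_mk_right _ _)
  have hw : overlapWeight P q = overlapWeight P (x, y, z) := by
    rw [overlapWeight, overlapWeight, hV, hE]
  have hqQ : P2Verts (x, y, z) ⊆ PackVerts Q := hV ▸ P2Verts_subset_PackVerts hq
  have hyQ : y ∈ PackVerts Q := hqQ (by simp)
  have hr : IsP2 G (u, x, y) := ⟨hux, hxyz.1, fun h : u = y => huQ (h ▸ hyQ)⟩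
  have hzy : s(z, y) ∈ PackEdges P := by
    refine mem_PackEdges_of_overlapWeight_le hxyz.reverse hr Sym2.eq_swap
      (mem_PackVerts.2 ⟨p, hp, hu⟩) (mem_PackEdges.2 ⟨p, hp, he⟩) ?_
    rw [overlapWeight_reverse P x y z, ← hw]
    exact hQ.overlapWeight_le_of_subset_insert hq huQ hr
      (by simp [hV, insert_subset_iff])
  obtain ⟨p', hp', hzyp'⟩ := mem_PackEdges.1 hzy
  have hzp' := mem_P2Verts_of_mem_P2Edges hzyp' (Sym2.mem_mk_left _ _)
  have hyp' := mem_P2Verts_of_mem_P2Edges hzyp' (Sym2.mem_mk_right _ _)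
  have hne : p' ≠ p := by
    rintro rfl
    exact (hP.1 p' hp').not_insert_subset hxyz (fun h => huQ (hqQ h))
      (by simp [insert_subset_iff, hu, hx, hyp', hzp'])
  have hcov := hQ.P2Verts_subset_PackVerts_of_pair hP hp hp' hq hne.symm (hV ▸ by simp) hx
    (hV ▸ by simp) hyp' (hV ▸ by simp) hzp' hxyz.2.1.ne
  refine ⟨p', hp', hcov, q, hq, x, hx, hV ▸ by simp, fun a ha => ?_⟩
  rw [hV, mem_erase, mem_P2Verts] at ha
  rcases ha with ⟨hax, rfl | rfl | rfl⟩
  exacts [absurd rfl hax, hyp', hzp']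

lemma not_middle (hP : IsP2Packing G P) {p : V × V × V} (hp : p ∈ P) {x y z u : V}
    (hq : (x, y, z) ∈ Q) (huQ : u ∉ PackVerts Q) (huy : G.Adj u y)
    (he : s(u, y) ∈ P2Edges p) : False := by
  have hxyz := hQ.isP2Packing.1 _ hq
  have hu := mem_P2Verts_of_mem_P2Edges he (Sym2.mem_mk_left _ _)
  have hy := mem_P2Verts_of_mem_P2Edges he (Sym2.mem_mk_right _ _)
  have huP : u ∈ PackVerts P := mem_PackVerts.2 ⟨p, hp, hu⟩
  have huyP : s(u, y) ∈ PackEdges P := mem_PackEdges.2 ⟨p, hp, he⟩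
  have hqQ := P2Verts_subset_PackVerts hq
  have hr₁ : IsP2 G (u, y, z) :=
    ⟨huy, hxyz.2.1, fun h : u = z => huQ (h ▸ hqQ (by simp))⟩
  have hr₂ : IsP2 G (u, y, x) :=
    ⟨huy, hxyz.1.symm, fun h : u = x => huQ (h ▸ hqQ (by simp))⟩
  have hxy : s(x, y) ∈ PackEdges P :=
    mem_PackEdges_of_overlapWeight_le hxyz hr₁ rfl huP huyP
      (hQ.overlapWeight_le_of_subset_insert hq huQ hr₁ (by simp [insert_subset_iff]))
  have hzy : s(z, y) ∈ PackEdges P :=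
    mem_PackEdges_of_overlapWeight_le hxyz.reverse hr₂ rfl huP huyP (by
      rw [overlapWeight_reverse P x y z]
      exact hQ.overlapWeight_le_of_subset_insert hq huQ hr₂ (by simp [insert_subset_iff]))
  have hx := hP.mem_P2Verts_of_mk_mem_PackEdges hp hy (Sym2.eq_swap ▸ hxy)
  have hz := hP.mem_P2Verts_of_mk_mem_PackEdges hp hy (Sym2.eq_swap ▸ hzy)
  exact (hP.1 p hp).not_insert_subset hxyz (fun h => huQ (hqQ h))
    (by simp [insert_subset_iff, hu, hx, hy, hz])

lemma exists_bridges (hP : IsP2Packing G P) (hlt : #P < n) {p : V × V × V} (hp : p ∈ P)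
    (hnot : ¬ P2Verts p ⊆ PackVerts Q) :
    ∃ p' ∈ P, P2Verts p' ⊆ PackVerts Q ∧ Bridges Q p p' := by
  obtain ⟨u, hu, huQ⟩ := not_subset.1 hnot
  obtain ⟨v, huv, he⟩ := (hP.1 p hp).exists_mem_P2Edges hu
  have hvQ : v ∈ PackVerts Q := by
    by_contra hvQ
    exact huv.ne (card_le_one.1 (hQ.card_P2Verts_sdiff_le_one hP hlt hp) u
      (mem_sdiff.2 ⟨hu, huQ⟩) v
      (mem_sdiff.2 ⟨mem_P2Verts_of_mem_P2Edges he (Sym2.mem_mk_right _ _), hvQ⟩))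
  obtain ⟨⟨x, y, z⟩, hq, hvq⟩ := mem_PackVerts.1 hvQ
  have hxyz := hQ.isP2Packing.1 _ hq
  rcases mem_P2Verts.1 hvq with rfl | rfl | rfl
  · exact hQ.exists_bridges_of_endpoint hP hp hq hxyz rfl rfl huQ huv he
  · exact (hQ.not_middle hP hp hq huQ huv he).elim
  · exact hQ.exists_bridges_of_endpoint hP hp hq hxyz.reverse (P2Verts_reverse _ _ _).symm
      (P2Edges_reverse _ _ _).symm huQ huv he

lemma five_mul_card_le (hP : IsP2Packing G P) (hlt : #P < n) :
    5 * #P ≤ 2 * #(PackVerts P ∩ PackVerts Q) := by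
  set D := P.filter fun p => ¬ P2Verts p ⊆ PackVerts Q
  have hD : #D ≤ #(P.filter fun p => P2Verts p ⊆ PackVerts Q) := by
    refine card_le_card_of_forall_subsingleton (Bridges Q) (fun p hp => ?_) ?_
    · obtain ⟨hp, hnot⟩ := mem_filter.1 hp
      obtain ⟨p', hp', hcov, hb⟩ := hQ.exists_bridges hP hlt hp hnot
      exact ⟨p', mem_filter.2 ⟨hp', hcov⟩, hb⟩
    · rintro p' hp' p₁ ⟨hp₁, hb₁⟩ p₂ ⟨hp₂, hb₂⟩
      obtain ⟨hp', hcov⟩ := mem_filter.1 hp'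
      exact hP.eq_of_bridges hQ.isP2Packing (mem_filter.1 hp₁).1 (mem_filter.1 hp₂).1 hp' hcov
        (mem_filter.1 hp₂).2 hb₁ hb₂
  have hsplit : #(P.filter fun p => P2Verts p ⊆ PackVerts Q) + #D = #P :=
    card_filter_add_card_filter_not _
  have hmissed : ∑ p ∈ P, #(P2Verts p \ PackVerts Q) ≤ #D := by
    rw [card_filter]
    refine sum_le_sum fun p hp => ?_
    split_ifs with hsub
    · rw [sdiff_eq_empty_iff_subset.2 hsub, card_empty]
    · exact hQ.card_P2Verts_sdiff_le_one hP hlt hp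
  have hsum :
      ∑ p ∈ P, (#(P2Verts p \ PackVerts Q) + #(P2Verts p ∩ PackVerts Q)) = 3 * #P := by
    rw [sum_congr rfl fun p hp => by rw [card_sdiff_add_card_inter, (hP.1 p hp).card_P2Verts],
      sum_const, smul_eq_mul, mul_comm]
  rw [sum_add_distrib, ← hP.card_PackVerts_inter] at hsum
  omega

end IsHeaviestPacking

end

/-- Theorem: if a maximal P2-packing P of size j can be beaten by a packing of
size j+1, then some packing Q of size j+1 reuses at least 2.5j vertices of P. -/
theorem stmt9 {V : Type*} [DecidableEq V] (G : SimpleGraph V)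
    (P : Finset (V × V × V)) (j : ℕ)
    (hP : IsMaximalP2Packing G P) (hj : P.card = j)
    (hex : ∃ Q : Finset (V × V × V), IsP2Packing G Q ∧ Q.card = j + 1) :
    ∃ Q : Finset (V × V × V), IsP2Packing G Q ∧ Q.card = j + 1 ∧
      5 * j ≤ 2 * (PackVerts P ∩ PackVerts Q).card := by
  obtain ⟨Q, hQ⟩ := exists_isHeaviestPacking P hex
  refine ⟨Q, hQ.isP2Packing, hQ.card_eq, ?_⟩
  subst hj
  exact hQ.five_mul_card_le hP.1 (Nat.lt_succ_self _)
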